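/- arXiv:1807.05124 — 4 statements merged into one kernel-verified Lean document; each statement's English description precedes it below -/
import Mathlib

section
/- Let X be a shift space over a finite alphabet A and let w ∈ L(X) be neutral. Then r(w) - 1 = Σ_{a : aw ∈ L(X)} (r(aw) - 1). -/
/-- `L` is factorial: factors of its elements belong to it. -/
def Factorial {A : Type*} (L : Set (List A)) : Prop :=
  ∀ u v : List A, u ++ v ∈ L → u ∈ L ∧ v ∈ L

/-- `L` is (bi)extendable: every word extends by a letter on both sides. -/
def Extendable {A : Type*} (L : Set (List A)) : Prop :=
  ∀ w ∈ L, ∃ a b : A, a :: (w ++ [b]) ∈ L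

/-- number of one-letter left extensions `ℓ(w)`. -/
noncomputable def lcount {A : Type*} (L : Set (List A)) (w : List A) : ℕ :=
  Set.ncard {a : A | a :: w ∈ L}

/-- number of one-letter right extensions `r(w)`. -/
noncomputable def rcount {A : Type*} (L : Set (List A)) (w : List A) : ℕ :=
  Set.ncard {b : A | w ++ [b] ∈ L}

/-- number of one-letter bi-extensions `e(w)`. -/
noncomputable def ecount {A : Type*} (L : Set (List A)) (w : List A) : ℕ :=
  Set.ncard {p : A × A | p.1 :: (w ++ [p.2]) ∈ L}

/-! Counting the bi-extensions `(a, b)` of `w` by their left letter gives `e(w) = Σ_a r(aw)`, and by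
factoriality only the left extensions `a` of `w` contribute. Hence the sum equals `e(w) - ℓ(w)`,
which is `r(w) - 1` by neutrality. -/

open Finset

lemma ncard_setOf_eq_card_filter {α : Type*} [Fintype α] (p : α → Prop) [DecidablePred p] :
    {x | p x}.ncard = #{x | p x} := by
  rw [Set.ncard_eq_toFinset_card', Set.toFinset_ofPred]

section
variable {A : Type*} (L : Set (List A))

lemma rcount_eq_zero_of_notMem (hfac : Factorial L) {w : List A} (hw : w ∉ L) :
    rcount L w = 0 := by
  have hempty : {b | w ++ [b] ∈ L} = ∅ :=
    Set.eq_empty_of_forall_notMem fun b hb => hw (hfac w [b] hb).1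
  rw [rcount, hempty, Set.ncard_empty]

variable [Fintype A]

lemma ecount_eq_sum_rcount (w : List A) : ecount L w = ∑ a, rcount L (a :: w) := by
  classical
  simp only [ecount, rcount, ncard_setOf_eq_card_filter, card_filter, Fintype.sum_prod_type,
    List.cons_append]

lemma finsum_rcount_sub_one_eq (hfac : Factorial L) (w : List A) :
    ∑ᶠ a ∈ {a | a :: w ∈ L}, ((rcount L (a :: w) : ℤ) - 1) = ecount L w - lcount L w := by
  classical
  have hsum : ∑ a with a :: w ∈ L, rcount L (a :: w) = ecount L w := by
    rw [ecount_eq_sum_rcount]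
    exact sum_filter_of_ne fun a _ h => by_contra fun ha => h (rcount_eq_zero_of_notMem L hfac ha)
  rw [← coe_filter_univ, finsum_mem_coe_finset, sum_sub_distrib, ← Nat.cast_sum, hsum, lcount,
    ncard_setOf_eq_card_filter]
  simp

end

theorem stmt1_general {A : Type*} [Fintype A] (L : Set (List A))
    (hfac : Factorial L)
    (w : List A)
    (hneutral : (ecount L w : ℤ) - lcount L w - rcount L w + 1 = 0) :
    (rcount L w : ℤ) - 1
      = ∑ᶠ a ∈ {a : A | a :: w ∈ L}, ((rcount L (a :: w) : ℤ) - 1) := by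
  rw [finsum_rcount_sub_one_eq L hfac]
  linarith

theorem stmt1 {A : Type*} [Fintype A] (L : Set (List A))
    (hfac : Factorial L) (hext : Extendable L)
    (w : List A) (hw : w ∈ L)
    (hneutral : (ecount L w : ℤ) - lcount L w - rcount L w + 1 = 0) :
    (rcount L w : ℤ) - 1
      = ∑ᶠ a ∈ {a : A | a :: w ∈ L}, ((rcount L (a :: w) : ℤ) - 1) :=
  stmt1_general L hfac w hneutral
end

section
/- Let X be a shift space over a finite alphabet such that every word of length at least n in L(X) is neutral. Then s_m(X) = s_n(X) for all m ≥ n; in particular the sequence sₙ(X) is eventually constant. -/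
/-!
A word of length `m + 1` in a factorial language is determined by its factor of length `m`
together with one letter, added on the right or on the left; a word of length `m + 2` by its
central factor of length `m` and a bi-extension. Summing over the words `w` of length `m`,
`p (m + 1) = ∑ r(w) = ∑ ℓ(w)` and `p (m + 2) = ∑ e(w)`, so if all these `w` are neutral then
`p (m + 2) = 2 p (m + 1) - p m`, that is `s (m + 1) = s m`.
-/

section Words

variable {A : Type*}

-- Written with `+ 1` on the left, since `ℓ + r - 1` would be truncated subtraction in `ℕ`.
def Neutral (L : Set (List A)) (w : List A) : Prop :=
  ecount L w + 1 = lcount L w + rcount L w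

variable [Finite A]

theorem finite_setOf_mem_length_eq (L : Set (List A)) (m : ℕ) :
    {w | w ∈ L ∧ w.length = m}.Finite :=
  (List.finite_length_eq A m).subset fun _ h => h.2

noncomputable def wordsOfLength (L : Set (List A)) (m : ℕ) : Finset (List A) :=
  (finite_setOf_mem_length_eq L m).toFinset

@[simp]
theorem mem_wordsOfLength {L : Set (List A)} {m : ℕ} {w : List A} :
    w ∈ wordsOfLength L m ↔ w ∈ L ∧ w.length = m :=
  Set.Finite.mem_toFinset _

theorem ncard_setOf_mem_length_eq (L : Set (List A)) (m : ℕ) :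
    {w | w ∈ L ∧ w.length = m}.ncard = (wordsOfLength L m).card :=
  Set.ncard_eq_toFinset_card _ _

theorem card_wordsOfLength_add_eq_sum {B : Type*} [Finite B] {L : Set (List A)}
    {k : ℕ} (ext : B → List A → List A) (hinj : (Function.uncurry ext).Injective)
    (hlen : ∀ b w, (ext b w).length = w.length + k)
    (hsurj : ∀ u : List A, k ≤ u.length → ∃ b w, ext b w = u)
    (hfactor : ∀ b w, ext b w ∈ L → w ∈ L) (m : ℕ) :
    (wordsOfLength L (m + k)).card = ∑ w ∈ wordsOfLength L m, {b | ext b w ∈ L}.ncard := by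
  classical
  have := Fintype.ofFinite B
  simp only [Set.ncard_eq_toFinset_card', Set.toFinset_ofPred]
  rw [← Finset.card_sigma]
  symm
  refine Finset.card_bij (fun q _ => ext q.2 q.1) ?_ ?_ ?_
  · rintro ⟨w, b⟩ hq
    simp only [Finset.mem_sigma, Finset.mem_filter, Finset.mem_univ, true_and,
      mem_wordsOfLength] at hq ⊢
    exact ⟨hq.2, by rw [hlen, hq.1.2]⟩
  · rintro ⟨w, b⟩ - ⟨w', b'⟩ - h
    cases hinj (a₁ := (b, w)) (a₂ := (b', w')) h
    rfl
  · intro u hu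
    rw [mem_wordsOfLength] at hu
    obtain ⟨b, w, rfl⟩ := hsurj u (by omega)
    refine ⟨⟨w, b⟩, ?_, rfl⟩
    simp only [Finset.mem_sigma, Finset.mem_filter, Finset.mem_univ, true_and,
      mem_wordsOfLength]
    have := hlen b w
    exact ⟨⟨hfactor b w hu.1, by omega⟩, hu.1⟩

section Factorial

variable {L : Set (List A)}

theorem card_wordsOfLength_succ_eq_sum_rcount (hL : Factorial L) (m : ℕ) :
    (wordsOfLength L (m + 1)).card = ∑ w ∈ wordsOfLength L m, rcount L w := by
  refine card_wordsOfLength_add_eq_sum (fun b w => w ++ [b]) ?_ (by simp) ?_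
    (fun b w h => (hL _ _ h).1) m
  · rintro ⟨b, w⟩ ⟨b', w'⟩ h
    obtain ⟨rfl, h⟩ := List.append_inj' h rfl
    simp_all
  · intro u hu
    obtain ⟨w, b, rfl⟩ := (List.eq_nil_or_concat' u).resolve_left (by rintro rfl; simp at hu)
    exact ⟨b, w, rfl⟩

theorem card_wordsOfLength_succ_eq_sum_lcount (hL : Factorial L) (m : ℕ) :
    (wordsOfLength L (m + 1)).card = ∑ w ∈ wordsOfLength L m, lcount L w := by
  refine card_wordsOfLength_add_eq_sum List.cons ?_ (by simp) ?_
    (fun a w h => (hL [a] w h).2) m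
  · rintro ⟨a, w⟩ ⟨a', w'⟩ h
    simp_all
  · rintro (_ | ⟨a, w⟩) hu
    · simp at hu
    · exact ⟨a, w, rfl⟩

theorem card_wordsOfLength_add_two_eq_sum_ecount (hL : Factorial L) (m : ℕ) :
    (wordsOfLength L (m + 2)).card = ∑ w ∈ wordsOfLength L m, ecount L w := by
  refine card_wordsOfLength_add_eq_sum (fun (p : A × A) w => p.1 :: (w ++ [p.2])) ?_ (by simp) ?_
    (fun p w h => (hL _ _ (hL [p.1] _ h).2).1) m
  · rintro ⟨⟨a, b⟩, w⟩ ⟨⟨a', b'⟩, w'⟩ h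
    simp only [Function.uncurry_apply_pair, List.cons.injEq] at h
    obtain ⟨rfl, h⟩ := h
    obtain ⟨rfl, h⟩ := List.append_inj' h rfl
    simp_all
  · rintro (_ | ⟨a, v⟩) hu
    · simp at hu
    · obtain ⟨w, b, rfl⟩ := (List.eq_nil_or_concat' v).resolve_left (by rintro rfl; simp at hu)
      exact ⟨(a, b), w, rfl⟩

theorem card_wordsOfLength_add_two_add_card_eq_two_mul (hL : Factorial L) (m : ℕ)
    (hneut : ∀ w ∈ L, w.length = m → Neutral L w) :
    (wordsOfLength L (m + 2)).card + (wordsOfLength L m).card =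
      2 * (wordsOfLength L (m + 1)).card := by
  have hsum : ∑ w ∈ wordsOfLength L m, (ecount L w + 1) =
      ∑ w ∈ wordsOfLength L m, (lcount L w + rcount L w) :=
    Finset.sum_congr rfl fun w hw => hneut w (mem_wordsOfLength.1 hw).1 (mem_wordsOfLength.1 hw).2
  rw [Finset.sum_add_distrib, Finset.sum_add_distrib, Finset.sum_const, smul_eq_mul, mul_one,
    ← card_wordsOfLength_add_two_eq_sum_ecount hL, ← card_wordsOfLength_succ_eq_sum_lcount hL,
    ← card_wordsOfLength_succ_eq_sum_rcount hL] at hsum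
  omega

end Factorial

end Words

theorem stmt5_general {A : Type*} [Fintype A] (L : Set (List A))
    (hfac : Factorial L) (n : ℕ)
    (hneut : ∀ w ∈ L, n ≤ w.length →
      (ecount L w : ℤ) = lcount L w + rcount L w - 1)
    (p : ℕ → ℤ) (hp : ∀ m, p m = Set.ncard {w : List A | w ∈ L ∧ w.length = m})
    (s : ℕ → ℤ) (hs : ∀ m, s m = p (m + 1) - p m) :
    ∀ m, n ≤ m → s m = s n := by
  have hstep : ∀ m, n ≤ m → s (m + 1) = s m := by
    intro m hm
    have h := card_wordsOfLength_add_two_add_card_eq_two_mul hfac m fun w hw hlen => by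
      have := hneut w hw (hlen ▸ hm)
      unfold Neutral
      omega
    simp only [hs, hp, ncard_setOf_mem_length_eq, add_assoc, Nat.reduceAdd]
    omega
  intro m hm
  induction m, hm using Nat.le_induction with
  | base => rfl
  | succ k hk ih => rw [hstep k hk, ih]

theorem stmt5 {A : Type*} [Fintype A] (L : Set (List A))
    (hfac : Factorial L) (hext : Extendable L) (n : ℕ)
    (hneut : ∀ w ∈ L, n ≤ w.length →
      (ecount L w : ℤ) = lcount L w + rcount L w - 1)
    (p : ℕ → ℤ) (hp : ∀ m, p m = Set.ncard {w : List A | w ∈ L ∧ w.length = m})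
    (s : ℕ → ℤ) (hs : ∀ m, s m = p (m + 1) - p m) :
    ∀ m, n ≤ m → s m = s n :=
  stmt5_general L hfac n hneut p hp s hs
end

section
/- Let X be a shift space over a finite alphabet such that sₙ(X) = p_{n+1}(X) - pₙ(X) ≤ k for all n. If (x₁,y₁),…,(x_ℓ,y_ℓ) are pairs of elements of X with x_i⁺ = y_i⁺ (equal right halves x_i[0,∞) = y_i[0,∞)) and (x_i)_{-1} ≠ (y_i)_{-1} for each i, and the right-infinite words x₁⁺, …, x_ℓ⁺ are pairwise distinct, then ℓ ≤ k. -/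
/-!
Take `N` so large that the prefixes of length `N` of the words `x i⁺` are pairwise distinct.
Deleting the first letter maps the words of length `N + 1` of the language onto those of
length `N`, since every factor extends to the left. The prefix of `x i⁺` has the two
distinct preimages `x i (-1) ⋯` and `y i (-1) ⋯`, so `p_{N+1}(X) ≥ p_N(X) + l`, and the
hypothesis `s_N(X) ≤ k` gives `l ≤ k`.
-/

open Function Set

/-- The language of a set `X ⊆ A^ℤ` of two-sided infinite words: all finite
factors of elements of `X`. -/
def lang {A : Type*} (X : Set (ℤ → A)) : Set (List A) :=
  {w | ∃ x ∈ X, ∃ k : ℤ, ∀ i : Fin w.length, w.get i = x (k + (i : ℤ))}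

section Counting

variable {α β : Type*}

lemma ncard_add_ncard_le_of_surjOn {f : α → β} {T : Set α} {S W : Set β}
    (hT : T.Finite) (hmaps : MapsTo f T S) (hsurj : SurjOn f T S) (hW : W ⊆ S)
    (htwo : ∀ s ∈ W, ∃ t₁ ∈ T, ∃ t₂ ∈ T, t₁ ≠ t₂ ∧ f t₁ = s ∧ f t₂ = s) :
    S.ncard + W.ncard ≤ T.ncard := by
  classical
  have hS : S.Finite := hsurj.image_eq_of_mapsTo hmaps ▸ hT.image f
  lift W to Finset β using hS.subset hW
  lift T to Finset α using hT
  lift S to Finset β using hS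
  simp only [ncard_coe_finset] at *
  rw [Finset.card_eq_sum_card_fiberwise hmaps]
  calc S.card + W.card
      = ∑ s ∈ S, (1 + if s ∈ W then 1 else 0) := by
        rw [Finset.sum_add_distrib, Finset.sum_boole, Finset.filter_mem_eq_inter,
          Finset.inter_eq_right.mpr (Finset.coe_subset.mp hW)]
        simp
    _ ≤ ∑ s ∈ S, (T.filter (f · = s)).card := by
        refine Finset.sum_le_sum fun s hs => ?_
        split_ifs with hsW
        · obtain ⟨t₁, ht₁, t₂, ht₂, hne, rfl, hft₂⟩ := htwo s hsW
          exact Finset.one_lt_card.mpr ⟨t₁, Finset.mem_filter.mpr ⟨ht₁, rfl⟩,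
            t₂, Finset.mem_filter.mpr ⟨ht₂, hft₂⟩, hne⟩
        · obtain ⟨t, ht, rfl⟩ := hsurj hs
          exact Finset.card_pos.mpr ⟨t, Finset.mem_filter.mpr ⟨ht, rfl⟩⟩

end Counting

section Factors

variable {A : Type*}

def factor (z : ℤ → A) (k : ℤ) (n : ℕ) : List A :=
  List.ofFn fun t : Fin n => z (k + t)

lemma factor_succ (z : ℤ → A) (k : ℤ) (n : ℕ) :
    factor z k (n + 1) = z k :: factor z (k + 1) n := by
  simp only [factor, List.ofFn_succ, Fin.val_zero, Fin.val_succ]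
  push_cast
  simp only [add_zero, add_assoc, add_comm (1 : ℤ)]

lemma length_factor (z : ℤ → A) (k : ℤ) (n : ℕ) : (factor z k n).length = n :=
  List.length_ofFn

lemma mem_lang_iff {X : Set (ℤ → A)} {w : List A} :
    w ∈ lang X ↔ ∃ z ∈ X, ∃ k, factor z k w.length = w := by
  refine exists_congr fun z => and_congr_right fun _ => exists_congr fun k => ?_
  simp [factor, List.ext_get_iff, eq_comm, Fin.forall_iff]

lemma factor_mem_lang {X : Set (ℤ → A)} {z : ℤ → A} (hz : z ∈ X) (k : ℤ) (n : ℕ) :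
    factor z k n ∈ lang X :=
  mem_lang_iff.mpr ⟨z, hz, k, by rw [length_factor]⟩

lemma tail_mem_lang {X : Set (ℤ → A)} {w : List A} (hw : w ∈ lang X) : w.tail ∈ lang X := by
  obtain ⟨z, hz, k, hzw⟩ := mem_lang_iff.mp hw
  cases w with
  | nil => exact hw
  | cons a v =>
    rw [List.length_cons, factor_succ, List.cons_eq_cons] at hzw
    exact hzw.2 ▸ factor_mem_lang hz (k + 1) v.length

lemma cons_mem_lang_of_factor_eq {X : Set (ℤ → A)} {z : ℤ → A} (hz : z ∈ X) {k : ℤ}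
    {n : ℕ} {w : List A} (hzw : factor z k n = w) : z (k - 1) :: w ∈ lang X := by
  have hcons := factor_mem_lang hz (k - 1) (n + 1)
  rwa [factor_succ, sub_add_cancel, hzw] at hcons

lemma exists_cons_mem_lang {X : Set (ℤ → A)} {w : List A} (hw : w ∈ lang X) :
    ∃ c, c :: w ∈ lang X :=
  let ⟨_, hz, _, hzw⟩ := mem_lang_iff.mp hw
  ⟨_, cons_mem_lang_of_factor_eq hz hzw⟩

lemma mapsTo_tail_lang (X : Set (ℤ → A)) (n : ℕ) :
    MapsTo List.tail {w | w ∈ lang X ∧ w.length = n + 1} {w | w ∈ lang X ∧ w.length = n} :=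
  fun w hw => ⟨tail_mem_lang hw.1, by simp [hw.2]⟩

lemma surjOn_tail_lang (X : Set (ℤ → A)) (n : ℕ) :
    SurjOn List.tail {w | w ∈ lang X ∧ w.length = n + 1} {w | w ∈ lang X ∧ w.length = n} :=
  fun w hw =>
    (exists_cons_mem_lang hw.1).elim fun c hc => ⟨c :: w, ⟨hc, by simp [hw.2]⟩, rfl⟩

lemma exists_factor_injective {ι : Type*} [Finite ι] (z : ι → ℤ → A)
    (hz : ∀ i j, i ≠ j → ∃ n : ℕ, z i n ≠ z j n) :
    ∃ N, Injective fun i => factor (z i) 0 N := by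
  have hz' : ∀ i j, ∃ n : ℕ, i ≠ j → z i n ≠ z j n := fun i j => by
    by_cases hij : i = j
    · exact ⟨0, fun h => (h hij).elim⟩
    · obtain ⟨n, hn⟩ := hz i j hij
      exact ⟨n, fun _ => hn⟩
  choose n hn using hz'
  obtain ⟨M, hM⟩ := Finite.bddAbove_range (uncurry n)
  refine ⟨M + 1, fun i j hij => by_contra fun hne => hn i j hne ?_⟩
  have hlt : n i j < M + 1 := Nat.lt_succ_of_le (hM ⟨(i, j), rfl⟩)
  simpa using congrFun (List.ofFn_inj.mp hij) ⟨n i j, hlt⟩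

end Factors

theorem stmt11 {A : Type*} [Fintype A] (X : Set (ℤ → A)) (k : ℕ)
    (hs : ∀ n : ℕ,
      (Set.ncard {w : List A | w ∈ lang X ∧ w.length = n + 1} : ℤ)
        - Set.ncard {w : List A | w ∈ lang X ∧ w.length = n} ≤ (k : ℤ))
    (l : ℕ) (x y : Fin l → (ℤ → A))
    (hx : ∀ i, x i ∈ X) (hy : ∀ i, y i ∈ X)
    (heq : ∀ i, ∀ n : ℕ, x i (n : ℤ) = y i (n : ℤ))
    (hneq : ∀ i, x i (-1) ≠ y i (-1))
    (hdist : ∀ i j, i ≠ j → ∃ n : ℕ, x i (n : ℤ) ≠ x j (n : ℤ)) :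
    l ≤ k := by
  obtain ⟨N, hinj⟩ := exists_factor_injective x hdist
  have hsN := hs N
  set T := {w : List A | w ∈ lang X ∧ w.length = N + 1}
  set W := range fun i => factor (x i) 0 N
  have hcons : ∀ i, ∀ z ∈ X, factor z 0 N = factor (x i) 0 N →
      z (-1) :: factor (x i) 0 N ∈ T := fun i z hz hzx =>
    ⟨zero_sub (1 : ℤ) ▸ cons_mem_lang_of_factor_eq hz hzx, by simp [length_factor]⟩
  have hxy : ∀ i, factor (y i) 0 N = factor (x i) 0 N := fun i => by
    simp only [factor, zero_add, heq]
  have htwo : ∀ s ∈ W, ∃ t₁ ∈ T, ∃ t₂ ∈ T, t₁ ≠ t₂ ∧ t₁.tail = s ∧ t₂.tail = s :=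
    forall_mem_range.mpr fun i =>
      ⟨_, hcons i (x i) (hx i) rfl, _, hcons i (y i) (hy i) (hxy i),
        fun h => hneq i (List.cons_eq_cons.mp h).1, rfl, rfl⟩
  have hW : W ⊆ {w | w ∈ lang X ∧ w.length = N} :=
    range_subset_iff.mpr fun i => ⟨factor_mem_lang (hx i) 0 N, length_factor _ _ _⟩
  have hT : T.Finite := (List.finite_length_eq A (N + 1)).subset fun w hw => hw.2
  have hcount :=
    ncard_add_ncard_le_of_surjOn hT (mapsTo_tail_lang X N) (surjOn_tail_lang X N) hW htwo
  rw [ncard_range_of_injective hinj, Nat.card_fin] at hcount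
  omega
end

section
/- Let X be an eventually dendric shift space with threshold m. For any finite X-maximal suffix code U ⊆ L(X), any finite X-maximal prefix code V ⊆ L(X), and any w ∈ L(X) with |w| ≥ m, the generalized extension graph E_{U,V}(w) — the bipartite graph on L_U(w) ⊔ R_V(w) with edges {(u,v) : uwv ∈ L(X)} — is a tree. -/
/-- The extension graph `E₁(w)`: bipartite graph on `L₁(w) ⊔ R₁(w)` with
edges the pairs `(a,b)` such that `awb ∈ L`. -/
def extGraph {A : Type*} (L : Set (List A)) (w : List A) :
    SimpleGraph ({a : A // a :: w ∈ L} ⊕ {b : A // w ++ [b] ∈ L}) where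
  Adj x y :=
    match x, y with
    | Sum.inl a, Sum.inr b => a.1 :: (w ++ [b.1]) ∈ L
    | Sum.inr b, Sum.inl a => a.1 :: (w ++ [b.1]) ∈ L
    | _, _ => False
  symm := ⟨by rintro (a | b) (c | d) h <;> first | exact h | exact h.elim⟩
  loopless := ⟨by rintro (a | b) h <;> exact h.elim⟩

/-- `L` is eventually dendric with threshold `m`. -/
def EvDendricWith {A : Type*} (L : Set (List A)) (m : ℕ) : Prop :=
  ∀ w ∈ L, m ≤ w.length → (extGraph L w).IsTree

/-- `L` is eventually dendric. -/
def EvDendric {A : Type*} (L : Set (List A)) : Prop :=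
  ∃ m, EvDendricWith L m

/-- The generalized extension graph `E_{U,V}(w)`: bipartite graph on
`L_U(w) ⊔ R_V(w)` with edges the pairs `(u,v)` such that `uwv ∈ L`. -/
def genExtGraph {A : Type*} (L : Set (List A)) (U V : Set (List A)) (w : List A) :
    SimpleGraph ({u : List A // u ∈ U ∧ u ++ w ∈ L} ⊕ {v : List A // v ∈ V ∧ w ++ v ∈ L}) where
  Adj x y :=
    match x, y with
    | Sum.inl u, Sum.inr v => u.1 ++ w ++ v.1 ∈ L
    | Sum.inr v, Sum.inl u => u.1 ++ w ++ v.1 ∈ L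
    | _, _ => False
  symm := ⟨by rintro (u | v) (u' | v') h <;> first | exact h | exact h.elim⟩
  loopless := ⟨by rintro (u | v) h <;> exact h.elim⟩

/-- `U` is a suffix code: no word of `U` is a proper suffix of another. -/
def IsSuffixCode {A : Type*} (U : Set (List A)) : Prop :=
  ∀ u ∈ U, ∀ v ∈ U, u <:+ v → u = v

/-- `V` is a prefix code: no word of `V` is a proper prefix of another. -/
def IsPrefixCode {A : Type*} (V : Set (List A)) : Prop :=
  ∀ u ∈ V, ∀ v ∈ V, u <+: v → u = v

/-- `U ⊆ L` is an `X`-maximal suffix code. -/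
def IsMaximalSuffixCode {A : Type*} (L U : Set (List A)) : Prop :=
  U ⊆ L ∧ IsSuffixCode U ∧
    ∀ U' : Set (List A), U' ⊆ L → IsSuffixCode U' → U ⊆ U' → U = U'

/-- `V ⊆ L` is an `X`-maximal prefix code. -/
def IsMaximalPrefixCode {A : Type*} (L V : Set (List A)) : Prop :=
  V ⊆ L ∧ IsPrefixCode V ∧
    ∀ V' : Set (List A), V' ⊆ L → IsPrefixCode V' → V ⊆ V' → V = V'


open SimpleGraph

/-!
Every graph `E_{U,V}(w)` is assembled from extension graphs by substituting trees for vertices.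
Let `p a` be a longest word of the prefix code `V`. By maximality, the words of `V` that extend
`p` are exactly the words `p b ∈ L` with `b` a letter; replacing them by `p` gives a maximal
prefix code `V'` of smaller total length. If `wp ∈ L`, then `E_{U,V}(w)` arises from
`E_{U,V'}(w)` by putting the tree `E_{U,A}(wp)` in place of the vertex `p`, whose neighbours are
exactly the left vertices of `E_{U,A}(wp)`; otherwise the two graphs coincide. Putting a tree in
place of a vertex of a tree yields a tree, so induction on the total length of `V`, which ends at
the star `E_{U,{ε}}(w)`, shows that `E_{U,V}(w)` is a tree whenever every `E_{U,A}(w')` with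
`|w'| ≥ m` is one. Starting from `E_{A,A}(w) = E₁(w)`, this handles `U = A`; reversing all words
swaps prefix codes with suffix codes, which gives every `E_{U,A}(w)`, and a second application of
the induction concludes.
-/

lemma Set.Finite.to_subtype_and {α : Type*} {s : Set α} (hs : s.Finite) (q : α → Prop) :
    Finite {x // x ∈ s ∧ q x} :=
  (hs.inter_of_left {x | q x}).to_subtype

namespace SimpleGraph

variable {α β γ α' β' : Type*}

def bipGraph (r : α → β → Prop) : SimpleGraph (α ⊕ β) where
  Adj x y :=
    match x, y with
    | Sum.inl a, Sum.inr b => r a b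
    | Sum.inr b, Sum.inl a => r a b
    | _, _ => False
  symm := ⟨by rintro (a | b) (c | d) h <;> exact h⟩
  loopless := ⟨by rintro (a | b) h <;> exact h.elim⟩

variable {r : α → β → Prop}

@[simp] lemma bipGraph_adj_inl_inr {a : α} {b : β} :
    (bipGraph r).Adj (.inl a) (.inr b) ↔ r a b := Iff.rfl

@[simp] lemma bipGraph_adj_inr_inl {a : α} {b : β} :
    (bipGraph r).Adj (.inr b) (.inl a) ↔ r a b := Iff.rfl

@[simp] lemma not_bipGraph_adj_inl_inl {a a' : α} : ¬ (bipGraph r).Adj (.inl a) (.inl a') :=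
  id

@[simp] lemma not_bipGraph_adj_inr_inr {b b' : β} : ¬ (bipGraph r).Adj (.inr b) (.inr b') :=
  id

lemma isTree_bipGraph_congr {r' : α' → β' → Prop} (eα : α ≃ α') (eβ : β ≃ β')
    (h : ∀ a b, r' (eα a) (eβ b) ↔ r a b) : (bipGraph r).IsTree ↔ (bipGraph r').IsTree :=
  Iso.isTree_iff
    { toEquiv := eα.sumCongr eβ
      map_rel_iff' := by rintro (a | b) (a' | b') <;> simp [h] }

lemma isTree_bipGraph_flip : (bipGraph (flip r)).IsTree ↔ (bipGraph r).IsTree :=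
  Iso.isTree_iff
    { toEquiv := Equiv.sumComm β α
      map_rel_iff' := by rintro (b | a) (b' | a') <;> simp [flip] }

noncomputable def bipGraphEdgeEquiv (r : α → β → Prop) :
    {p : α × β // r p.1 p.2} ≃ (bipGraph r).edgeSet := by
  refine Equiv.ofBijective (fun p => ⟨s(.inl p.1.1, .inr p.1.2), p.2⟩) ⟨?_, ?_⟩
  · rintro ⟨⟨a, b⟩, h⟩ ⟨⟨a', b'⟩, h'⟩ hab
    have := congrArg Subtype.val hab
    simp_all
  · rintro ⟨e, he⟩
    induction e with
    | _ x y =>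
      rcases x with a | b <;> rcases y with a' | b'
      · simp at he
      · exact ⟨⟨(a, b'), he⟩, rfl⟩
      · exact ⟨⟨(a', b), he⟩, Subtype.ext Sym2.eq_swap⟩
      · simp at he

lemma natCard_edgeSet_bipGraph (r : α → β → Prop) :
    Nat.card (bipGraph r).edgeSet = Nat.card {p : α × β // r p.1 p.2} :=
  (Nat.card_congr (bipGraphEdgeEquiv r)).symm

lemma Reachable.of_forall_adj {V V' : Type*} {G : SimpleGraph V} {G' : SimpleGraph V'}
    (f : V → V') (h : ∀ x y, G.Adj x y → G'.Reachable (f x) (f y)) {x y : V}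
    (hxy : G.Reachable x y) : G'.Reachable (f x) (f y) := by
  simp only [reachable_iff_reflTransGen] at h hxy ⊢
  exact Relation.ReflTransGen.lift' f h _ _ hxy

lemma isTree_bipGraph_of_unique [Finite α] [Unique β] (hr : ∀ a b, r a b) :
    (bipGraph r).IsTree := by
  have hcard : Nat.card {p : α × β // r p.1 p.2} = Nat.card (α × β) :=
    Nat.card_congr (Equiv.subtypeUnivEquiv fun p => hr p.1 p.2)
  rw [isTree_iff_connected_and_card, natCard_edgeSet_bipGraph, hcard]
  refine ⟨(connected_iff_exists_forall_reachable _).mpr ⟨.inr default, ?_⟩, ?_⟩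
  · rintro (a | b)
    · exact Adj.reachable (show (bipGraph r).Adj (.inr default) (.inl a) from hr a _)
    · rw [Unique.eq_default b]
  · simp [Nat.card_sum]

section Substitution

variable (rβ : α → β → Prop) (s : α → Prop) (rγ : α → γ → Prop)

def bipGraphSumHom : (bipGraph fun (a : {a // s a}) (c : γ) => rγ a c) →g
    bipGraph fun a (x : β ⊕ γ) => x.elim (rβ a) (rγ a) where
  toFun := Sum.map Subtype.val .inr
  map_rel' := by rintro (a | c) (a' | c') h <;> exact h

variable {rβ s rγ}

lemma connected_bipGraph_sum
    (hG' : (bipGraph fun a (o : Option β) => o.elim (s a) (rβ a)).Connected)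
    (hH : (bipGraph fun (a : {a // s a}) (c : γ) => rγ a c).Connected) :
    (bipGraph fun a (x : β ⊕ γ) => x.elim (rβ a) (rγ a)).Connected := by
  let ψ := bipGraphSumHom rβ s rγ
  let h₀ := hH.nonempty.some
  let φ : α ⊕ Option β → α ⊕ (β ⊕ γ) := Sum.elim .inl fun o => o.elim (ψ h₀) (.inr ∘ .inl)
  have hφ : ∀ x y, (bipGraph fun a (o : Option β) => o.elim (s a) (rβ a)).Adj x y →
      (bipGraph fun a (x : β ⊕ γ) => x.elim (rβ a) (rγ a)).Reachable (φ x) (φ y) := by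
    have key : ∀ a (o : Option β), o.elim (s a) (rβ a) →
        (bipGraph fun a (x : β ⊕ γ) => x.elim (rβ a) (rγ a)).Reachable (.inl a) (φ (.inr o)) := by
      rintro a (_ | b) h
      · exact (hH (.inl ⟨a, h⟩) h₀).map ψ
      · exact Adj.reachable h
    rintro (a | o) (a' | o') h
    · exact h.elim
    · exact key a o' h
    · exact (key a' o h).symm
    · exact h.elim
  refine (connected_iff_exists_forall_reachable _).mpr ⟨ψ h₀, ?_⟩
  rintro (a | b | c)
  · exact Reachable.of_forall_adj φ hφ (hG' (.inr none) (.inl a))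
  · exact Reachable.of_forall_adj φ hφ (hG' (.inr none) (.inr (some b)))
  · exact (hH h₀ (.inr c)).map ψ

/-- The vertex `none` of `G'` is adjacent exactly to the `a` with `s a`, which are the left
vertices of `H`; putting the tree `H` in place of `none` gives a tree. -/
theorem isTree_bipGraph_sum [Finite α] [Finite β] [Finite γ] (hsub : ∀ a c, rγ a c → s a)
    (hG' : (bipGraph fun a (o : Option β) => o.elim (s a) (rβ a)).IsTree)
    (hH : (bipGraph fun (a : {a // s a}) (c : γ) => rγ a c).IsTree) :
    (bipGraph fun a (x : β ⊕ γ) => x.elim (rβ a) (rγ a)).IsTree := by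
  rw [isTree_iff_connected_and_card] at hG' hH ⊢
  refine ⟨connected_bipGraph_sum hG'.1 hH.1, ?_⟩
  have eG : {p : α × (β ⊕ γ) // p.2.elim (rβ p.1) (rγ p.1)} ≃
      {p : α × β // rβ p.1 p.2} ⊕ {p : α × γ // rγ p.1 p.2} :=
    { toFun := fun
        | ⟨(a, .inl b), h⟩ => .inl ⟨(a, b), h⟩
        | ⟨(a, .inr c), h⟩ => .inr ⟨(a, c), h⟩
      invFun := fun
        | .inl ⟨(a, b), h⟩ => ⟨(a, .inl b), h⟩
        | .inr ⟨(a, c), h⟩ => ⟨(a, .inr c), h⟩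
      left_inv := by rintro ⟨⟨a, b | c⟩, h⟩ <;> rfl
      right_inv := by rintro (⟨⟨a, b⟩, h⟩ | ⟨⟨a, c⟩, h⟩) <;> rfl }
  have eG' : {p : α × Option β // p.2.elim (s p.1) (rβ p.1)} ≃
      {p : α × β // rβ p.1 p.2} ⊕ {a // s a} :=
    { toFun := fun
        | ⟨(a, some b), h⟩ => .inl ⟨(a, b), h⟩
        | ⟨(a, none), h⟩ => .inr ⟨a, h⟩
      invFun := fun
        | .inl ⟨(a, b), h⟩ => ⟨(a, some b), h⟩
        | .inr ⟨a, h⟩ => ⟨(a, none), h⟩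
      left_inv := by rintro ⟨⟨a, _ | b⟩, h⟩ <;> rfl
      right_inv := by rintro (⟨⟨a, b⟩, h⟩ | ⟨a, h⟩) <;> rfl }
  have eH : {p : {a // s a} × γ // rγ p.1 p.2} ≃ {p : α × γ // rγ p.1 p.2} :=
    { toFun := fun p => ⟨(p.1.1, p.1.2), p.2⟩
      invFun := fun p => ⟨(⟨p.1.1, hsub _ _ p.2⟩, p.1.2), p.2⟩
      left_inv := fun _ => rfl
      right_inv := fun _ => rfl }
  have hG'card := hG'.2
  have hHcard := hH.2
  rw [natCard_edgeSet_bipGraph, Nat.card_congr eG'] at hG'card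
  rw [natCard_edgeSet_bipGraph, Nat.card_congr eH] at hHcard
  rw [natCard_edgeSet_bipGraph, Nat.card_congr eG]
  simp only [Nat.card_sum, Finite.card_option] at hG'card hHcard ⊢
  omega

end Substitution

end SimpleGraph

section Words

variable {A : Type*} {L U V : Set (List A)}

def singletonWords (L : Set (List A)) : Set (List A) := {x | x ∈ L ∧ x.length = 1}

lemma singletonWords_finite [Finite A] : (singletonWords L).Finite :=
  (List.finite_length_eq A 1).subset fun _ hx => hx.2

lemma singletonWords_preimage_reverse :
    singletonWords (List.reverse ⁻¹' L) = List.reverse ⁻¹' singletonWords L := by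
  ext x
  simp [singletonWords]

def PrefixesCover (L V : Set (List A)) (N : ℕ) : Prop :=
  ∀ x ∈ L, N ≤ x.length → ∃ v ∈ V, v <+: x

lemma Factorial.exists_append_mem (hfac : Factorial L) (hext : Extendable L) (k : ℕ)
    {x : List A} (hx : x ∈ L) : ∃ y : List A, y.length = k ∧ x ++ y ∈ L := by
  induction k generalizing x with
  | zero => exact ⟨[], rfl, by simpa using hx⟩
  | succ k ih =>
    obtain ⟨a, b, hab⟩ := hext x hx
    obtain ⟨y, hy, hxby⟩ := ih (hfac [a] (x ++ [b]) hab).2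
    exact ⟨b :: y, by simp [hy], by simpa using hxby⟩

lemma IsMaximalPrefixCode.exists_prefixesCover (hVfin : V.Finite)
    (hV : IsMaximalPrefixCode L V) : ∃ N, PrefixesCover L V N := by
  obtain ⟨N, hN⟩ := (hVfin.image List.length).bddAbove
  refine ⟨N + 1, fun x hx hxN => ?_⟩
  by_contra! hxV
  have hcode : IsPrefixCode (insert x V) := by
    rintro u (rfl | hu) v (rfl | hv) huv
    · rfl
    · have := hN ⟨v, hv, rfl⟩
      have := huv.length_le
      omega
    · exact (hxV u hu huv).elim
    · exact hV.2.1 u hu v hv huv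
  have hmax := hV.2.2 _ (Set.insert_subset hx hV.1) hcode (Set.subset_insert x V)
  exact hxV x (hmax ▸ Set.mem_insert x V) (List.prefix_refl x)

lemma Factorial.preimage_reverse (hfac : Factorial L) : Factorial (List.reverse ⁻¹' L) := by
  intro u v huv
  have h := hfac v.reverse u.reverse (by simpa using huv)
  exact ⟨by simpa using h.2, by simpa using h.1⟩

lemma Extendable.preimage_reverse (hext : Extendable L) :
    Extendable (List.reverse ⁻¹' L) := by
  intro w hw
  obtain ⟨a, b, hab⟩ := hext w.reverse hw
  exact ⟨b, a, by simpa using hab⟩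

lemma isPrefixCode_preimage_reverse_iff :
    IsPrefixCode (List.reverse ⁻¹' U) ↔ IsSuffixCode U := by
  refine ⟨fun h u hu v hv huv => ?_, fun h u hu v hv huv => ?_⟩
  · exact List.reverse_injective <|
      h u.reverse (by simpa using hu) v.reverse (by simpa using hv) (List.reverse_prefix.mpr huv)
  · exact List.reverse_injective <| h _ hu _ hv (List.reverse_suffix.mpr huv)

lemma isSuffixCode_preimage_reverse_iff :
    IsSuffixCode (List.reverse ⁻¹' V) ↔ IsPrefixCode V := by
  refine ⟨fun h u hu v hv huv => ?_, fun h u hu v hv huv => ?_⟩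
  · exact List.reverse_injective <|
      h u.reverse (by simpa using hu) v.reverse (by simpa using hv) (List.reverse_suffix.mpr huv)
  · exact List.reverse_injective <| h _ hu _ hv (List.reverse_prefix.mpr huv)

lemma IsMaximalSuffixCode.preimage_reverse (hU : IsMaximalSuffixCode L U) :
    IsMaximalPrefixCode (List.reverse ⁻¹' L) (List.reverse ⁻¹' U) := by
  refine ⟨fun u hu => hU.1 hu, isPrefixCode_preimage_reverse_iff.mpr hU.2.1,
    fun V' hV'L hV' hUV' => ?_⟩
  have hU' := hU.2.2 (List.reverse ⁻¹' V') (fun v hv => by simpa using hV'L hv)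
    (isSuffixCode_preimage_reverse_iff.mpr hV') (fun u hu => hUV' (by simpa using hu))
  rw [hU', Set.preimage_preimage]
  simp

end Words

section ExtensionGraphs

variable {A : Type*} {L U V : Set (List A)}

lemma genExtGraph_eq_bipGraph (L U V : Set (List A)) (w : List A) :
    genExtGraph L U V w = bipGraph fun (u : {u // u ∈ U ∧ u ++ w ∈ L})
      (v : {v // v ∈ V ∧ w ++ v ∈ L}) => u.1 ++ w ++ v.1 ∈ L := by
  ext (u | v) (u' | v') <;> rfl

lemma extGraph_eq_bipGraph (L : Set (List A)) (w : List A) :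
    extGraph L w = bipGraph fun (a : {a // a :: w ∈ L}) (b : {b // w ++ [b] ∈ L}) =>
      a.1 :: (w ++ [b.1]) ∈ L := by
  ext (a | b) (a' | b') <;> rfl

lemma isTree_genExtGraph_preimage_reverse_iff (w : List A) :
    (genExtGraph (List.reverse ⁻¹' L) (List.reverse ⁻¹' V) (List.reverse ⁻¹' U)
      w.reverse).IsTree ↔ (genExtGraph L U V w).IsTree := by
  rw [genExtGraph_eq_bipGraph, genExtGraph_eq_bipGraph, ← isTree_bipGraph_flip]
  refine isTree_bipGraph_congr
    (Equiv.subtypeEquiv (List.reverse_involutive.toPerm _) fun u => by simp)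
    (Equiv.subtypeEquiv (List.reverse_involutive.toPerm _) fun v => by simp)
    fun u v => by
      simp only [flip, Set.mem_preimage, List.reverse_append, List.reverse_reverse,
        List.append_assoc]
      exact Iff.rfl

noncomputable def singletonWordsEquiv (P : List A → Prop) (hP : ∀ x, P x → x ∈ L) :
    {a : A // P [a]} ≃ {x // x ∈ singletonWords L ∧ P x} := by
  refine Equiv.ofBijective (fun a => ⟨[a.1], ⟨hP _ a.2, rfl⟩, a.2⟩) ⟨?_, ?_⟩
  · intro a a' h
    simpa [Subtype.ext_iff] using h
  · rintro ⟨x, ⟨-, hx⟩, hPx⟩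
    obtain ⟨a, rfl⟩ := List.length_eq_one_iff.mp hx
    exact ⟨⟨a, hPx⟩, rfl⟩

lemma isTree_genExtGraph_singletonWords (hfac : Factorial L) {m : ℕ}
    (hdendric : EvDendricWith L m) {w : List A} (hw : w ∈ L) (hwlen : m ≤ w.length) :
    (genExtGraph L (singletonWords L) (singletonWords L) w).IsTree := by
  have hE₁ := hdendric w hw hwlen
  rw [extGraph_eq_bipGraph] at hE₁
  rw [genExtGraph_eq_bipGraph]
  exact (isTree_bipGraph_congr
    (singletonWordsEquiv (L := L) (· ++ w ∈ L) fun x hx => (hfac x w hx).1)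
    (singletonWordsEquiv (L := L) (w ++ · ∈ L) fun x hx => (hfac w x hx).2)
    fun _ _ => Iff.rfl).mp hE₁

end ExtensionGraphs

section Collapse

variable {A : Type*} {L V : Set (List A)} {p : List A} {c : A}

-- When `p` is the parent of a longest word of `V`, this replaces the children of `p` by `p`.
def collapse (V : Set (List A)) (p : List A) : Set (List A) :=
  insert p {v | v ∈ V ∧ ¬ p <+: v}

lemma mem_collapse {v : List A} : v ∈ collapse V p ↔ v = p ∨ v ∈ V ∧ ¬ p <+: v :=
  Iff.rfl

lemma Set.Finite.collapse (hVfin : V.Finite) (p : List A) : (collapse V p).Finite :=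
  (hVfin.subset fun _ hv => hv.1).insert p

lemma IsPrefixCode.not_prefix_of_append_singleton_mem (hV : IsPrefixCode V)
    (hpc : p ++ [c] ∈ V) {u : List A} (hu : u ∈ V) : ¬ u <+: p := by
  intro hup
  have := congrArg List.length (hV u hu _ hpc (hup.trans (List.prefix_append p [c])))
  have := hup.length_le
  simp only [List.length_append, List.length_singleton] at *
  omega

lemma IsPrefixCode.collapse (hV : IsPrefixCode V) (hp : ∀ u ∈ V, ¬ u <+: p) :
    IsPrefixCode (collapse V p) := by
  rintro u (rfl | ⟨hu, hpu⟩) v (rfl | ⟨hv, hpv⟩) huv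
  · rfl
  · exact (hpv huv).elim
  · exact (hp u hu huv).elim
  · exact hV u hu v hv huv

lemma PrefixesCover.collapse {N : ℕ} (h : PrefixesCover L V N) :
    PrefixesCover L (collapse V p) N := by
  intro x hx hxN
  obtain ⟨v, hv, hvx⟩ := h x hx hxN
  by_cases hpv : p <+: v
  · exact ⟨p, Set.mem_insert p _, hpv.trans hvx⟩
  · exact ⟨v, Set.mem_insert_of_mem p ⟨hv, hpv⟩, hvx⟩

lemma PrefixesCover.nonempty {N : ℕ} (h : PrefixesCover L V N) (hfac : Factorial L)
    (hext : Extendable L) {w : List A} (hw : w ∈ L) : V.Nonempty := by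
  obtain ⟨y, hy, hwy⟩ := hfac.exists_append_mem hext N hw
  obtain ⟨v, hv, -⟩ := h _ hwy (by simp [hy])
  exact ⟨v, hv⟩

lemma IsPrefixCode.eq_singleton_nil (hV : IsPrefixCode V) (hnil : [] ∈ V) : V = {[]} :=
  Set.eq_singleton_iff_unique_mem.mpr ⟨hnil, fun v hv => (hV [] hnil v hv v.nil_prefix).symm⟩

lemma IsPrefixCode.length_eq_of_prefix (hV : IsPrefixCode V) (hpc : p ++ [c] ∈ V)
    (hmax : ∀ v ∈ V, v.length ≤ p.length + 1) {v : List A} (hv : v ∈ V) (hpv : p <+: v) :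
    v.length = p.length + 1 := by
  have hvp : v ≠ p := fun h => hV.not_prefix_of_append_singleton_mem hpc hv (h ▸ v.prefix_refl)
  have := hmax v hv
  have := hpv.length_le
  have : v.length ≠ p.length := fun h => hvp (hpv.eq_of_length h.symm).symm
  omega

lemma IsPrefixCode.append_mem_of_prefixesCover (hV : IsPrefixCode V) (hpc : p ++ [c] ∈ V)
    (hmax : ∀ v ∈ V, v.length ≤ p.length + 1) (hfac : Factorial L) (hext : Extendable L)
    {N : ℕ} (hcov : PrefixesCover L V N) {x : List A} (hx : x.length = 1) (hpx : p ++ x ∈ L) :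
    p ++ x ∈ V := by
  obtain ⟨a, rfl⟩ := List.length_eq_one_iff.mp hx
  obtain ⟨y, hy, hpay⟩ := hfac.exists_append_mem hext N hpx
  obtain ⟨v, hv, hvx⟩ := hcov _ hpay (by simp only [List.length_append, hy]; omega)
  have hv' : v <+: p ++ [a] :=
    List.prefix_of_prefix_length_le hvx (List.prefix_append _ _) (by simpa using hmax v hv)
  rcases List.prefix_concat_iff.mp hv' with rfl | hvp
  · exact hv
  · exact (hV.not_prefix_of_append_singleton_mem hpc hv hvp).elim

lemma IsPrefixCode.sum_length_collapse_lt (hV : IsPrefixCode V) (hpc : p ++ [c] ∈ V)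
    (hVfin : V.Finite) :
    ∑ v ∈ (hVfin.collapse p).toFinset, v.length < ∑ v ∈ hVfin.toFinset, v.length := by
  classical
  have hpV : p ∉ V := fun h => hV.not_prefix_of_append_singleton_mem hpc h p.prefix_refl
  have hsub : (hVfin.collapse p).toFinset ⊆ insert p (hVfin.toFinset.erase (p ++ [c])) := by
    rintro v hv
    rcases (Set.Finite.mem_toFinset _).mp hv with rfl | ⟨hv, hpv⟩
    · exact Finset.mem_insert_self _ _
    · refine Finset.mem_insert_of_mem (Finset.mem_erase.mpr ⟨?_, by simpa using hv⟩)
      rintro rfl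
      exact hpv (List.prefix_append _ _)
  calc ∑ v ∈ (hVfin.collapse p).toFinset, v.length
      ≤ ∑ v ∈ insert p (hVfin.toFinset.erase (p ++ [c])), v.length :=
        Finset.sum_le_sum_of_subset hsub
    _ = p.length + ∑ v ∈ hVfin.toFinset.erase (p ++ [c]), v.length :=
        Finset.sum_insert fun h => hpV (by simpa using Finset.mem_of_mem_erase h)
    _ < (p ++ [c]).length + ∑ v ∈ hVfin.toFinset.erase (p ++ [c]), v.length := by simp
    _ = ∑ v ∈ hVfin.toFinset, v.length := Finset.add_sum_erase _ _ (by simpa using hpc)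

end Collapse

section Induction

variable {A : Type*} {L U V : Set (List A)} {p w : List A}

lemma isTree_genExtGraph_congr_right {V' : Set (List A)}
    (h : ∀ v, w ++ v ∈ L → (v ∈ V ↔ v ∈ V')) :
    (genExtGraph L U V w).IsTree ↔ (genExtGraph L U V' w).IsTree := by
  rw [genExtGraph_eq_bipGraph, genExtGraph_eq_bipGraph]
  exact isTree_bipGraph_congr (Equiv.refl _)
    (Equiv.subtypeEquivRight fun v => and_congr_left (h v)) fun _ _ => Iff.rfl

lemma isTree_genExtGraph_singleton_nil (hUfin : U.Finite) (hw : w ∈ L) :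
    (genExtGraph L U {[]} w).IsTree := by
  have := hUfin.to_subtype_and (· ++ w ∈ L)
  have : Unique {v // v ∈ ({[]} : Set (List A)) ∧ w ++ v ∈ L} :=
    { default := ⟨[], rfl, by simpa using hw⟩
      uniq := by rintro ⟨v, rfl, -⟩; rfl }
  rw [genExtGraph_eq_bipGraph]
  refine isTree_bipGraph_of_unique ?_
  rintro u ⟨_, rfl, -⟩
  simpa using u.2.2

noncomputable def collapseEquiv (hwp : w ++ p ∈ L) :
    Option {v // (v ∈ V ∧ ¬ p <+: v) ∧ w ++ v ∈ L} ≃ {v // v ∈ collapse V p ∧ w ++ v ∈ L} := by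
  refine Equiv.ofBijective
    (fun o => o.elim ⟨p, Set.mem_insert p _, hwp⟩ fun b =>
      ⟨b.1, Set.mem_insert_of_mem p b.2.1, b.2.2⟩) ⟨?_, ?_⟩
  · rintro (_ | b) (_ | b') h <;> have h := congrArg Subtype.val h
    · rfl
    · exact (b'.2.1.2 (h ▸ p.prefix_refl)).elim
    · exact (b.2.1.2 (h ▸ p.prefix_refl)).elim
    · exact congrArg some (Subtype.ext h)
  · rintro ⟨v, rfl | hv, hwv⟩
    · exact ⟨none, rfl⟩
    · exact ⟨some ⟨v, hv, hwv⟩, rfl⟩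

noncomputable def childrenEquiv (hfac : Factorial L)
    (hchild : ∀ v ∈ V, p <+: v → v.length = p.length + 1)
    (hchild' : ∀ x : List A, x.length = 1 → p ++ x ∈ L → p ++ x ∈ V) :
    {v // (v ∈ V ∧ ¬ p <+: v) ∧ w ++ v ∈ L} ⊕
      {x // x ∈ singletonWords L ∧ w ++ p ++ x ∈ L} ≃ {v // v ∈ V ∧ w ++ v ∈ L} := by
  refine Equiv.ofBijective (Sum.elim (fun b => ⟨b.1, b.2.1.1, b.2.2⟩) fun x =>
    ⟨p ++ x.1, hchild' _ x.2.1.2 (hfac w _ (by simpa using x.2.2)).2, by simpa using x.2.2⟩)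
    ⟨?_, ?_⟩
  · refine Function.Injective.sumElim (fun b b' h => ?_) (fun x x' h => ?_) fun b x h => ?_ <;>
      have h := congrArg Subtype.val h
    · exact Subtype.ext h
    · exact Subtype.ext (List.append_cancel_left h)
    · exact b.2.1.2 ⟨x.1, h.symm⟩
  · rintro ⟨v, hv, hwv⟩
    by_cases hpv : p <+: v
    · obtain ⟨x, rfl⟩ := hpv
      have hx : x.length = 1 := by simpa using hchild _ hv ⟨x, rfl⟩
      refine ⟨.inr ⟨x, ⟨(hfac (w ++ p) x (by simpa using hwv)).2, hx⟩, by simpa using hwv⟩, rfl⟩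
    · exact ⟨.inl ⟨v, ⟨hv, hpv⟩, hwv⟩, rfl⟩

def leftExtensionsAppendEquiv (hfac : Factorial L) :
    {a : {u // u ∈ U ∧ u ++ w ∈ L} // a.1 ++ w ++ p ∈ L} ≃ {u // u ∈ U ∧ u ++ (w ++ p) ∈ L} :=
  (Equiv.subtypeSubtypeEquivSubtypeInter (fun u => u ∈ U ∧ u ++ w ∈ L) (· ++ w ++ p ∈ L)).trans <|
    Equiv.subtypeEquivRight fun u => ⟨fun ⟨⟨hu, _⟩, h⟩ => ⟨hu, by simpa using h⟩,
      fun ⟨hu, h⟩ => ⟨⟨hu, (hfac (u ++ w) p (by simpa using h)).1⟩, by simpa using h⟩⟩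

theorem isTree_genExtGraph_of_collapse [Finite A] (hfac : Factorial L) (hUfin : U.Finite)
    (hVfin : V.Finite) (hchild : ∀ v ∈ V, p <+: v → v.length = p.length + 1)
    (hchild' : ∀ x : List A, x.length = 1 → p ++ x ∈ L → p ++ x ∈ V)
    (hcol : (genExtGraph L U (collapse V p) w).IsTree)
    (hbase : w ++ p ∈ L → (genExtGraph L U (singletonWords L) (w ++ p)).IsTree) :
    (genExtGraph L U V w).IsTree := by
  by_cases hwp : w ++ p ∈ L
  swap
  · refine (isTree_genExtGraph_congr_right fun v hwv => ?_).mpr hcol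
    rw [mem_collapse]
    refine ⟨fun hv => .inr ⟨hv, fun ⟨t, hpt⟩ => hwp (hfac (w ++ p) t ?_).1⟩, ?_⟩
    · simpa [← hpt] using hwv
    · rintro (rfl | ⟨hv, -⟩)
      exacts [(hwp hwv).elim, hv]
  have := hUfin.to_subtype_and (· ++ w ∈ L)
  have : Finite {v // (v ∈ V ∧ ¬ p <+: v) ∧ w ++ v ∈ L} :=
    Set.Finite.to_subtype_and (hVfin.subset fun _ hv => hv.1 : {v | v ∈ V ∧ ¬ p <+: v}.Finite) _
  have := (singletonWords_finite (L := L)).to_subtype_and (w ++ p ++ · ∈ L)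
  have hG' : (bipGraph fun (a : {u // u ∈ U ∧ u ++ w ∈ L})
      (o : Option {v // (v ∈ V ∧ ¬ p <+: v) ∧ w ++ v ∈ L}) =>
        o.elim (a.1 ++ w ++ p ∈ L) fun b => a.1 ++ w ++ b.1 ∈ L).IsTree := by
    rw [genExtGraph_eq_bipGraph] at hcol
    exact (isTree_bipGraph_congr (Equiv.refl _) (collapseEquiv hwp)
      (by rintro a (_ | b) <;> rfl)).mpr hcol
  have hH : (bipGraph fun (a : {a : {u // u ∈ U ∧ u ++ w ∈ L} // a.1 ++ w ++ p ∈ L})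
      (x : {x // x ∈ singletonWords L ∧ w ++ p ++ x ∈ L}) =>
        a.1.1 ++ w ++ p ++ x.1 ∈ L).IsTree := by
    have hH := hbase hwp
    rw [genExtGraph_eq_bipGraph] at hH
    exact (isTree_bipGraph_congr (leftExtensionsAppendEquiv hfac) (Equiv.refl _)
      fun a x => by simp only [List.append_assoc]; rfl).mpr hH
  have hG := isTree_bipGraph_sum (rγ := fun (a : {u // u ∈ U ∧ u ++ w ∈ L})
    (x : {x // x ∈ singletonWords L ∧ w ++ p ++ x ∈ L}) => a.1 ++ w ++ p ++ x.1 ∈ L)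
    (fun a x h => (hfac _ x.1 h).1) hG' hH
  rw [genExtGraph_eq_bipGraph]
  refine (isTree_bipGraph_congr (Equiv.refl _) (childrenEquiv hfac hchild hchild') ?_).mp hG
  rintro a (b | x)
  · exact Iff.rfl
  · simp only [List.append_assoc]
    exact Iff.rfl

end Induction

section Main

variable {A : Type*} [Finite A] {L U V : Set (List A)} {m : ℕ}

theorem isTree_genExtGraph_of_prefixesCover (hfac : Factorial L) (hext : Extendable L)
    (hUfin : U.Finite)
    (hbase : ∀ w ∈ L, m ≤ w.length → (genExtGraph L U (singletonWords L) w).IsTree)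
    {N : ℕ} (hVfin : V.Finite) (hV : IsPrefixCode V) (hcov : PrefixesCover L V N)
    {w : List A} (hw : w ∈ L) (hwlen : m ≤ w.length) : (genExtGraph L U V w).IsTree := by
  obtain ⟨n, hn⟩ : ∃ n, ∑ v ∈ hVfin.toFinset, v.length = n := ⟨_, rfl⟩
  induction n using Nat.strong_induction_on generalizing V with
  | _ n ih =>
  by_cases hnil : [] ∈ V
  · rw [hV.eq_singleton_nil hnil]
    exact isTree_genExtGraph_singleton_nil hUfin hw
  obtain ⟨vm, hvm, hmax⟩ := hVfin.toFinset.exists_max_image List.length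
    (by simpa using hcov.nonempty hfac hext hw)
  rw [Set.Finite.mem_toFinset] at hvm
  obtain ⟨p, c, rfl⟩ := (List.eq_nil_or_concat' vm).resolve_left (by rintro rfl; exact hnil hvm)
  have hmax' : ∀ v ∈ V, v.length ≤ p.length + 1 := fun v hv => by
    simpa using hmax v (by simpa using hv)
  refine isTree_genExtGraph_of_collapse hfac hUfin hVfin
    (fun v hv => hV.length_eq_of_prefix hvm hmax' hv)
    (fun x hx => hV.append_mem_of_prefixesCover hvm hmax' hfac hext hcov hx) ?_
    fun hwp => hbase _ hwp (by simp only [List.length_append]; omega)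
  exact ih _ (hn ▸ hV.sum_length_collapse_lt hvm hVfin) (hVfin.collapse p)
    (hV.collapse fun u hu => hV.not_prefix_of_append_singleton_mem hvm hu) hcov.collapse rfl

lemma isTree_genExtGraph_singletonWords_right (hfac : Factorial L) (hext : Extendable L)
    (hdendric : EvDendricWith L m) (hUfin : U.Finite) (hU : IsMaximalSuffixCode L U)
    {w : List A} (hw : w ∈ L) (hwlen : m ≤ w.length) :
    (genExtGraph L U (singletonWords L) w).IsTree := by
  have hUrev : (List.reverse ⁻¹' U).Finite := hUfin.preimage List.reverse_injective.injOn
  obtain ⟨N, hcov⟩ := hU.preimage_reverse.exists_prefixesCover hUrev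
  rw [← isTree_genExtGraph_preimage_reverse_iff, ← singletonWords_preimage_reverse]
  refine isTree_genExtGraph_of_prefixesCover hfac.preimage_reverse hext.preimage_reverse
    singletonWords_finite (fun w' hw' hw'len => ?_) hUrev hU.preimage_reverse.2.1 hcov
    (by simpa using hw) (by simpa using hwlen)
  rw [singletonWords_preimage_reverse, ← List.reverse_reverse w',
    isTree_genExtGraph_preimage_reverse_iff]
  exact isTree_genExtGraph_singletonWords hfac hdendric hw' (by simpa using hw'len)

end Main

theorem stmt17 {A : Type*} [Fintype A] (L : Set (List A))
    (hfac : Factorial L) (hext : Extendable L)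
    (m : ℕ) (hdendric : EvDendricWith L m)
    (U V : Set (List A)) (hUfin : U.Finite) (hVfin : V.Finite)
    (hU : IsMaximalSuffixCode L U) (hV : IsMaximalPrefixCode L V)
    (w : List A) (hw : w ∈ L) (hwlen : m ≤ w.length) :
    (genExtGraph L U V w).IsTree := by
  obtain ⟨N, hcov⟩ := hV.exists_prefixesCover hVfin
  exact isTree_genExtGraph_of_prefixesCover hfac hext hUfin
    (fun _ => isTree_genExtGraph_singletonWords_right hfac hext hdendric hUfin hU)
    hVfin hV.2.1 hcov hw hwlen
end
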